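/- Linear independence of forest rational functions: fix n ≥ 1. For each increasing rooted forest F on {1,…,n} (given by a parent map p : {1,…,n} → {0,1,…,n} with p(v) < v, vertices with p(v) = 0 being roots, and w ↠ v meaning p^k(w) = v for some k ≥ 1), define F_F(ξ_1,…,ξ_n) := Π_{v=1}^{n} (ξ_v + Σ_{w : w ↠ v} ξ_w)^{−1} on the set of ξ ∈ ℝ^n where all these linear forms are nonzero. If real coefficients (a_F), indexed by all increasing rooted forests F on {1,…,n}, satisfy Σ_F a_F · F_F(ξ) = 0 for every ξ ∈ ℝ^n at which all the linear forms ξ_v + Σ_{w ↠ v} ξ_w (over all forests F appearing and all vertices v) are nonzero, then a_F = 0 for every F. -/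
import Mathlib


/-- `w` is a strict descendant of `v` in the forest with parent map `p`. -/
def descends (p : ℕ → ℕ) (w v : ℕ) : Prop := ∃ k : ℕ, 0 < k ∧ p^[k] w = v

/-- The set of strict descendants of `v` among the vertices `{1,…,n}`. -/
noncomputable def descSet (n : ℕ) (p : ℕ → ℕ) (v : ℕ) : Finset ℕ :=
  letI := Classical.decPred fun w => descends p w v
  (Finset.Icc 1 n).filter fun w => descends p w v

/-- An increasing rooted forest on `{1,…,n}`: a parent map with `p v < v` on `{1,…,n}`
(vertices with `p v = 0` are roots), normalized to `0` outside `{1,…,n}` so that two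
forests are equal exactly when their parent maps coincide on `{1,…,n}`. -/
def IsForest (n : ℕ) (p : ℕ → ℕ) : Prop :=
  (∀ v, 1 ≤ v → v ≤ n → p v < v) ∧ ∀ v, v = 0 ∨ n < v → p v = 0

/-- The rational function `F_F(ξ) = Π_v (ξ_v + Σ_{w ↠ v} ξ_w)⁻¹` attached to a forest. -/
noncomputable def forestFn (n : ℕ) (p : ℕ → ℕ) (ξ : ℕ → ℝ) : ℝ :=
  ∏ v ∈ Finset.Icc 1 n, (ξ v + ∑ w ∈ descSet n p v, ξ w)⁻¹

open Filter Finset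

theorem forest_map_le {n : ℕ} {p : ℕ → ℕ} (hp : IsForest n p) (y : ℕ) : p y ≤ y := by
  rcases Nat.eq_zero_or_pos y with h0 | h1
  · simp [h0, hp.2 0 (Or.inl rfl)]
  · rcases le_or_gt y n with h2 | h2
    · exact (hp.1 y h1 h2).le
    · simp [hp.2 y (Or.inr h2)]

theorem forest_iter_le {n : ℕ} {p : ℕ → ℕ} (hp : IsForest n p) (k w : ℕ) : p^[k] w ≤ w := by
  induction k with
  | zero => simp
  | succ k ih =>
    rw [Function.iterate_succ_apply']
    exact (forest_map_le hp _).trans ih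

theorem forest_iter_lt {n : ℕ} {p : ℕ → ℕ} (hp : IsForest n p) {k w : ℕ} (hk : 0 < k)
    (h1 : 1 ≤ w) (h2 : w ≤ n) : p^[k] w < w := by
  obtain ⟨j, rfl⟩ := Nat.exists_eq_succ_of_ne_zero hk.ne'
  rw [Function.iterate_succ_apply]
  exact lt_of_le_of_lt (forest_iter_le hp j (p w)) (hp.1 w h1 h2)

theorem descends_lt {n : ℕ} {p : ℕ → ℕ} (hp : IsForest n p) {w v : ℕ}
    (h1 : 1 ≤ w) (h2 : w ≤ n) (hd : descends p w v) : v < w := by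
  obtain ⟨k, hk, he⟩ := hd
  exact he ▸ forest_iter_lt hp hk h1 h2

theorem not_descends_zero {n : ℕ} {p : ℕ → ℕ} (hp : IsForest n p) {v : ℕ} (hv : 1 ≤ v) :
    ¬ descends p 0 v := by
  rintro ⟨k, hk, he⟩
  have h0 : ∀ k, p^[k] 0 = 0 := by
    intro k; induction k with
    | zero => rfl
    | succ k ih => rw [Function.iterate_succ_apply', ih]; exact hp.2 0 (Or.inl rfl)
  rw [h0 k] at he; omega

theorem mem_descSet {m : ℕ} {p : ℕ → ℕ} {w v : ℕ} :
    w ∈ descSet m p v ↔ 1 ≤ w ∧ w ≤ m ∧ descends p w v := by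
  unfold descSet
  simp [Finset.mem_filter, Finset.mem_Icc, and_assoc]

theorem notMem_descSet_self {m : ℕ} {p : ℕ → ℕ} {v : ℕ} (hp : IsForest m p) :
    v ∉ descSet m p v := by
  rw [mem_descSet]; rintro ⟨h1, h2, hd⟩
  exact absurd (descends_lt hp h1 h2 hd) (lt_irrefl v)

theorem descSet_top {n : ℕ} {p : ℕ → ℕ} (hp : IsForest (n+1) p) :
    descSet (n+1) p (n+1) = ∅ := by
  ext w; simp only [mem_descSet, Finset.notMem_empty, iff_false]
  rintro ⟨h1, h2, hd⟩
  exact absurd (descends_lt hp h1 h2 hd) (by omega)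

theorem descends_iff {p : ℕ → ℕ} {m v : ℕ} :
    descends p m v ↔ p m = v ∨ descends p (p m) v := by
  constructor
  · rintro ⟨k, hk, he⟩
    obtain ⟨j, rfl⟩ := Nat.exists_eq_succ_of_ne_zero hk.ne'
    rw [Function.iterate_succ_apply] at he
    rcases Nat.eq_zero_or_pos j with rfl | hj
    · exact Or.inl he
    · exact Or.inr ⟨j, hj, he⟩
  · rintro (he | ⟨k, hk, he⟩)
    · exact ⟨1, one_pos, by simpa using he⟩
    · exact ⟨k+1, k.succ_pos, by rwa [Function.iterate_succ_apply]⟩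

def resMap (n : ℕ) (p : ℕ → ℕ) : ℕ → ℕ := fun v => if v ≤ n then p v else 0

def extMap (n u : ℕ) (p : ℕ → ℕ) : ℕ → ℕ := fun v => if v = n+1 then u else p v

theorem resMap_isForest {n : ℕ} {p : ℕ → ℕ} (hp : IsForest (n+1) p) :
    IsForest n (resMap n p) := by
  constructor
  · intro v h1 h2
    simp only [resMap, if_pos h2]
    exact hp.1 v h1 (by omega)
  · intro v hv
    rcases hv with rfl | hv
    · simpa [resMap] using hp.2 0 (Or.inl rfl)
    · simp only [resMap]
      rw [if_neg (by omega)]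

theorem extMap_isForest {n u : ℕ} {p : ℕ → ℕ} (hu : u ≤ n) (hp : IsForest n p) :
    IsForest (n+1) (extMap n u p) := by
  constructor
  · intro v h1 h2
    by_cases hv : v = n+1
    · subst hv
      show (if n+1 = n+1 then u else p (n+1)) < n+1
      rw [if_pos rfl]
      omega
    · simp only [extMap, if_neg hv]
      exact hp.1 v h1 (by omega)
  · intro v hv
    have hvne : v ≠ n+1 := by omega
    simp only [extMap, if_neg hvne]
    exact hp.2 v (by omega)

theorem res_ext_eq {n u : ℕ} {p : ℕ → ℕ} (hp : IsForest n p) :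
    resMap n (extMap n u p) = p := by
  funext v
  simp only [resMap, extMap]
  by_cases hv : v ≤ n
  · rw [if_pos hv, if_neg (by omega)]
  · rw [if_neg hv, (hp.2 v (Or.inr (by omega)))]

theorem ext_res_eq {n u : ℕ} {p : ℕ → ℕ} (hp : IsForest (n+1) p) (hpu : p (n+1) = u) :
    extMap n u (resMap n p) = p := by
  funext v
  simp only [resMap, extMap]
  by_cases hv : v = n+1
  · subst hv; rw [if_pos rfl, hpu]
  · rw [if_neg hv]
    by_cases hv2 : v ≤ n
    · rw [if_pos hv2]
    · rw [if_neg hv2, (hp.2 v (Or.inr (by omega))).symm]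

theorem resMap_iterate {n : ℕ} {p : ℕ → ℕ} (hp : IsForest (n+1) p) :
    ∀ (k w : ℕ), w ≤ n → (resMap n p)^[k] w = p^[k] w := by
  intro k
  induction k with
  | zero => intro w _; rfl
  | succ k ih =>
    intro w hw
    rw [Function.iterate_succ_apply, Function.iterate_succ_apply]
    have hres : resMap n p w = p w := if_pos hw
    rw [hres]
    exact ih (p w) (le_trans (forest_map_le hp w) hw)

theorem descends_resMap {n : ℕ} {p : ℕ → ℕ} (hp : IsForest (n+1) p) {w v : ℕ} (hw : w ≤ n) :
    descends (resMap n p) w v ↔ descends p w v := by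
  constructor
  · rintro ⟨k, hk, he⟩
    exact ⟨k, hk, by rwa [resMap_iterate hp k w hw] at he⟩
  · rintro ⟨k, hk, he⟩
    exact ⟨k, hk, by rwa [resMap_iterate hp k w hw]⟩

theorem descSet_resMap {n : ℕ} {p : ℕ → ℕ} (hp : IsForest (n+1) p) (v : ℕ) :
    descSet n (resMap n p) v = (descSet (n+1) p v).erase (n+1) := by
  ext w
  rw [Finset.mem_erase, mem_descSet, mem_descSet]
  constructor
  · rintro ⟨h1, h2, hd⟩
    exact ⟨by omega, h1, by omega, (descends_resMap hp h2).mp hd⟩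
  · rintro ⟨hne, h1, h2, hd⟩
    have h2' : w ≤ n := by omega
    exact ⟨h1, h2', (descends_resMap hp h2').mpr hd⟩

noncomputable def sigmaFn (m : ℕ) (p : ℕ → ℕ) (v : ℕ) (ξ : ℕ → ℝ) : ℝ :=
  ξ v + ∑ w ∈ descSet m p v, ξ w

theorem forestFn_eq (m : ℕ) (p : ℕ → ℕ) (ξ : ℕ → ℝ) :
    forestFn m p ξ = ∏ v ∈ Finset.Icc 1 m, (sigmaFn m p v ξ)⁻¹ := rfl

theorem sigmaFn_add_mul (m : ℕ) (p : ℕ → ℕ) (v : ℕ) (f g : ℕ → ℝ) (x : ℝ) :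
    sigmaFn m p v (fun w => f w + x * g w) = sigmaFn m p v f + x * sigmaFn m p v g := by
  simp only [sigmaFn, Finset.sum_add_distrib, Finset.mul_sum, mul_add]
  ring

noncomputable def ecoef (n u : ℕ) (w : ℕ) : ℝ :=
  (if w = n+1 then 1 else 0) - (if w = u then 1 else 0)

theorem sum_ecoef (n u : ℕ) (s : Finset ℕ) :
    ∑ w ∈ s, ecoef n u w
      = (if n+1 ∈ s then (1:ℝ) else 0) - (if u ∈ s then (1:ℝ) else 0) := by
  classical
  simp only [ecoef, Finset.sum_sub_distrib]
  rw [Finset.sum_ite_eq' s (n+1) (fun _ => (1:ℝ)), Finset.sum_ite_eq' s u (fun _ => (1:ℝ))]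

theorem B_eq_zero {n u : ℕ} {p : ℕ → ℕ} (hu : u ≤ n) (hp : IsForest (n+1) p)
    (hpu : p (n+1) = u) {v : ℕ} (h1 : 1 ≤ v) (h2 : v ≤ n) :
    sigmaFn (n+1) p v (ecoef n u) = 0 := by
  have key : (n+1 ∈ descSet (n+1) p v) ↔ (v = u ∨ u ∈ descSet (n+1) p v) := by
    rw [mem_descSet, mem_descSet]
    constructor
    · rintro ⟨_, _, hd⟩
      rcases descends_iff.mp hd with he | hd'
      · left; omega
      · rw [hpu] at hd'
        rcases Nat.eq_zero_or_pos u with rfl | hu1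
        · exact absurd hd' (not_descends_zero hp h1)
        · right; exact ⟨hu1, by omega, hd'⟩
    · rintro (rfl | ⟨hu1, _, hd⟩)
      · exact ⟨by omega, by omega, descends_iff.mpr (Or.inl hpu)⟩
      · exact ⟨by omega, le_refl _, descends_iff.mpr (Or.inr (by rwa [hpu]))⟩
  have hnot : ¬ (v = u ∧ u ∈ descSet (n+1) p v) := by
    rintro ⟨rfl, hmem⟩
    exact notMem_descSet_self hp hmem
  rw [sigmaFn, sum_ecoef, ecoef, if_neg (by omega : ¬ v = n+1)]
  by_cases h : v = u
  · rw [if_pos h, if_pos (key.mpr (Or.inl h)), if_neg (fun hm => hnot ⟨h, hm⟩)]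
    ring
  · by_cases h3 : u ∈ descSet (n+1) p v
    · rw [if_neg h, if_pos (key.mpr (Or.inr h3)), if_pos h3]; ring
    · have hm : n+1 ∉ descSet (n+1) p v := by
        intro hm
        rcases key.mp hm with h' | h'
        · exact h h'
        · exact h3 h'
      rw [if_neg h, if_neg hm, if_neg h3]
      ring

theorem B_ne_zero {n u : ℕ} {p : ℕ → ℕ} (hu : u ≤ n) (hp : IsForest (n+1) p)
    (hpu : p (n+1) ≠ u) :
    ∃ v, 1 ≤ v ∧ v ≤ n ∧ sigmaFn (n+1) p v (ecoef n u) ≠ 0 := by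
  have hw0n : p (n+1) ≤ n := by
    have := hp.1 (n+1) (by omega) (le_refl _); omega
  rcases lt_or_gt_of_ne hpu with hlt | hgt
  · -- p (n+1) < u, take v := u
    have hu1 : 1 ≤ u := by omega
    refine ⟨u, hu1, hu, ?_⟩
    have hnd : (n+1) ∉ descSet (n+1) p u := by
      rw [mem_descSet]; rintro ⟨_, _, hd⟩
      rcases descends_iff.mp hd with he | hd'
      · omega
      · rcases Nat.eq_zero_or_pos (p (n+1)) with h0 | hh1
        · exact not_descends_zero hp hu1 (h0 ▸ hd')
        · exact absurd (descends_lt hp hh1 (by omega) hd') (by omega)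
    have hself : u ∉ descSet (n+1) p u := notMem_descSet_self hp
    rw [sigmaFn, sum_ecoef, ecoef,
      if_neg (by omega : ¬ u = n+1), if_pos rfl, if_neg hnd, if_neg hself]
    norm_num
  · -- u < p (n+1), take v := p (n+1)
    refine ⟨p (n+1), by omega, hw0n, ?_⟩
    have hmem : (n+1) ∈ descSet (n+1) p (p (n+1)) := by
      rw [mem_descSet]
      exact ⟨by omega, le_refl _, 1, one_pos, by simp⟩
    have hund : u ∉ descSet (n+1) p (p (n+1)) := by
      rw [mem_descSet]; rintro ⟨hu1, _, hd⟩
      exact absurd (descends_lt hp hu1 (by omega) hd) (by omega)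
    rw [sigmaFn, sum_ecoef, ecoef,
      if_neg (by omega : ¬ p (n+1) = n+1), if_neg (by omega : ¬ p (n+1) = u),
      if_pos hmem, if_neg hund]
    norm_num

theorem B_top {n u : ℕ} {p : ℕ → ℕ} (hu : u ≤ n) (hp : IsForest (n+1) p) :
    sigmaFn (n+1) p (n+1) (ecoef n u) = 1 := by
  rw [sigmaFn, descSet_top hp, Finset.sum_empty, ecoef, if_pos rfl,
    if_neg (by omega : ¬ n+1 = u)]
  ring

theorem A_eq {n : ℕ} {p : ℕ → ℕ} (hp : IsForest (n+1) p) (ξ' : ℕ → ℝ) {v : ℕ}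
    (h1 : 1 ≤ v) (h2 : v ≤ n) :
    sigmaFn (n+1) p v (fun w => if w ≤ n then ξ' w else 0)
      = sigmaFn n (resMap n p) v ξ' := by
  rw [sigmaFn, sigmaFn, descSet_resMap hp]
  rw [if_pos h2]
  congr 1
  rw [← Finset.sum_erase (descSet (n+1) p v)
    (by show (if n+1 ≤ n then ξ' (n+1) else (0:ℝ)) = 0
        rw [if_neg (by omega : ¬ n+1 ≤ n)] :
      (fun w => if w ≤ n then ξ' w else (0:ℝ)) (n+1) = 0)]
  apply Finset.sum_congr rfl
  intro w hw
  rw [Finset.mem_erase, mem_descSet] at hw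
  exact if_pos (by omega : w ≤ n)

theorem A_top {n : ℕ} {p : ℕ → ℕ} (hp : IsForest (n+1) p) (ξ' : ℕ → ℝ) :
    sigmaFn (n+1) p (n+1) (fun w => if w ≤ n then ξ' w else 0) = 0 := by
  rw [sigmaFn, descSet_top hp, Finset.sum_empty, if_neg (by omega : ¬ n+1 ≤ n)]
  ring

instance forestsFinite (n : ℕ) : Finite {p : ℕ → ℕ // IsForest n p} := by
  have hinj : Function.Injective
      (fun F : {p : ℕ → ℕ // IsForest n p} => (fun i : Fin (n+1) =>
        (⟨F.1 i.1, by
          have h1 := forest_map_le F.2 i.1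
          have h2 := i.2
          omega⟩ : Fin (n+1)))) := by
    intro F G hFG
    apply Subtype.ext; funext v
    by_cases hv : v ≤ n
    · have := congrFun hFG ⟨v, by omega⟩
      exact congrArg Fin.val this
    · rw [F.2.2 v (Or.inr (by omega)), G.2.2 v (Or.inr (by omega))]
  exact Finite.of_injective _ hinj

open Filter Finset

theorem tendsto_inv_affine {A B : ℝ} (hB : B ≠ 0) :
    Filter.Tendsto (fun x : ℝ => (A + x * B)⁻¹) Filter.atTop (nhds 0) := by
  rcases Ne.lt_or_gt hB with hneg | hpos
  · have h1 : Filter.Tendsto (fun x : ℝ => -(A + x * B)) Filter.atTop Filter.atTop := by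
      have h2 : Filter.Tendsto (fun x : ℝ => -A + x * (-B)) Filter.atTop Filter.atTop := by
        apply Filter.tendsto_atTop_add_const_left
        exact Filter.Tendsto.atTop_mul_const (by linarith) Filter.tendsto_id
      have h3 : (fun x : ℝ => -(A + x * B)) = fun x : ℝ => -A + x * (-B) := by
        funext x; ring
      rw [h3]; exact h2
    have h2 := h1.inv_tendsto_atTop
    have h3 : (fun x : ℝ => (A + x * B)⁻¹) = fun x : ℝ => -((-(A + x * B))⁻¹) := by
      funext x; rw [inv_neg, neg_neg]
    rw [h3]
    simpa using h2.neg
  · apply Filter.Tendsto.inv_tendsto_atTop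
    apply Filter.tendsto_atTop_add_const_left
    exact Filter.Tendsto.atTop_mul_const hpos Filter.tendsto_id

theorem forest_key (n : ℕ) :
    ∀ a : {p : ℕ → ℕ // IsForest n p} → ℝ,
    (∀ ξ : ℕ → ℝ,
      (∀ F : {p : ℕ → ℕ // IsForest n p}, ∀ v ∈ Finset.Icc 1 n,
        ξ v + ∑ w ∈ descSet n F.1 v, ξ w ≠ 0) →
      ∑ᶠ F : {p : ℕ → ℕ // IsForest n p}, a F * forestFn n F.1 ξ = 0) →
    ∀ F, a F = 0 := by
  induction n with
  | zero =>
    intro a h F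
    have h0 := h (fun _ => 1)
      (by intro F v hv; exact absurd hv (by rw [Finset.mem_Icc]; omega))
    have hforest : forestFn 0 F.1 (fun _ => 1) = 1 := by
      rw [forestFn, Finset.Icc_eq_empty (by omega), Finset.prod_empty]
    have hall : ∀ G : {p : ℕ → ℕ // IsForest 0 p}, G = F := by
      intro G
      apply Subtype.ext; funext v
      rcases Nat.eq_zero_or_pos v with rfl | hv
      · rw [G.2.2 0 (Or.inl rfl), F.2.2 0 (Or.inl rfl)]
      · rw [G.2.2 v (Or.inr hv), F.2.2 v (Or.inr hv)]
    rw [finsum_eq_single _ F (fun G hG => absurd (hall G) hG), hforest, mul_one] at h0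
    exact h0
  | succ n IH =>
    intro a h F₀
    classical
    haveI := forestsFinite (n+1)
    haveI := forestsFinite n
    letI : Fintype {p : ℕ → ℕ // IsForest (n+1) p} := Fintype.ofFinite _
    letI : Fintype {p : ℕ → ℕ // IsForest n p} := Fintype.ofFinite _
    set u := F₀.1 (n+1) with hu_def
    have hu : u ≤ n := by
      have := F₀.2.1 (n+1) (by omega) (le_refl _)
      omega
    let ext : {p : ℕ → ℕ // IsForest n p} → {p : ℕ → ℕ // IsForest (n+1) p} :=
      fun F' => ⟨extMap n u F'.1, extMap_isForest hu F'.2⟩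
    have key' : ∀ F' : {p : ℕ → ℕ // IsForest n p}, a (ext F') = 0 := by
      apply IH (fun F' => a (ext F'))
      intro ξ' hξ'
      set ξ₀ : ℕ → ℝ := fun w => if w ≤ n then ξ' w else 0 with hξ₀
      -- the affine decomposition of each linear form
      have hsig : ∀ (p : ℕ → ℕ) (v : ℕ) (x : ℝ),
          sigmaFn (n+1) p v (fun w => ξ₀ w + x * ecoef n u w)
            = sigmaFn (n+1) p v ξ₀ + x * sigmaFn (n+1) p v (ecoef n u) :=
        fun p v x => sigmaFn_add_mul (n+1) p v ξ₀ (ecoef n u) x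
      -- limits of individual terms
      have hterm : ∀ H : {p : ℕ → ℕ // IsForest (n+1) p},
          Tendsto (fun x : ℝ => x * forestFn (n+1) H.1 (fun w => ξ₀ w + x * ecoef n u w))
            atTop
            (nhds (if H.1 (n+1) = u then forestFn n (resMap n H.1) ξ' else 0)) := by
        rintro ⟨p, hp⟩
        simp only
        have hev : (fun x : ℝ =>
            x * forestFn (n+1) p (fun w => ξ₀ w + x * ecoef n u w))
              =ᶠ[atTop] (fun x : ℝ => ∏ v ∈ Finset.Icc 1 n,
                  (sigmaFn (n+1) p v (fun w => ξ₀ w + x * ecoef n u w))⁻¹) := by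
          filter_upwards [eventually_ne_atTop (0:ℝ)] with x hx
          rw [forestFn_eq]
          rw [(Finset.insert_Icc_right_eq_Icc_add_one (by omega)).symm,
            Finset.prod_insert (by rw [Finset.mem_Icc]; omega)]
          have hσtop : sigmaFn (n+1) p (n+1) (fun w => ξ₀ w + x * ecoef n u w) = x := by
            rw [hsig, A_top hp ξ', B_top hu hp]; ring
          rw [hσtop, ← mul_assoc, mul_inv_cancel₀ hx, one_mul]
        have hprod : Tendsto
            (fun x : ℝ => ∏ v ∈ Finset.Icc 1 n,
              (sigmaFn (n+1) p v (fun w => ξ₀ w + x * ecoef n u w))⁻¹) atTop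
            (nhds (∏ v ∈ Finset.Icc 1 n,
              (if sigmaFn (n+1) p v (ecoef n u) = 0
                then (sigmaFn (n+1) p v ξ₀)⁻¹ else 0))) := by
          apply tendsto_finset_prod
          intro v _
          by_cases hB : sigmaFn (n+1) p v (ecoef n u) = 0
          · rw [if_pos hB]
            have hconst : (fun x : ℝ =>
                (sigmaFn (n+1) p v (fun w => ξ₀ w + x * ecoef n u w))⁻¹)
                = fun _ => (sigmaFn (n+1) p v ξ₀)⁻¹ := by
              funext x; rw [hsig, hB, mul_zero, add_zero]
            rw [hconst]
            exact tendsto_const_nhds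
          · rw [if_neg hB]
            have hfn : (fun x : ℝ =>
                (sigmaFn (n+1) p v (fun w => ξ₀ w + x * ecoef n u w))⁻¹)
                = fun x : ℝ =>
                  (sigmaFn (n+1) p v ξ₀ + x * sigmaFn (n+1) p v (ecoef n u))⁻¹ := by
              funext x; rw [hsig]
            rw [hfn]
            exact tendsto_inv_affine hB
        have htarget : (∏ v ∈ Finset.Icc 1 n,
              (if sigmaFn (n+1) p v (ecoef n u) = 0
                then (sigmaFn (n+1) p v ξ₀)⁻¹ else 0))
            = (if p (n+1) = u then forestFn n (resMap n p) ξ' else 0) := by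
          by_cases hpu : p (n+1) = u
          · rw [if_pos hpu, forestFn_eq]
            apply Finset.prod_congr rfl
            intro v hv
            rw [Finset.mem_Icc] at hv
            rw [if_pos (B_eq_zero hu hp hpu hv.1 hv.2)]
            rw [A_eq hp ξ' hv.1 hv.2]
          · rw [if_neg hpu]
            obtain ⟨v, h1, h2, hB⟩ := B_ne_zero hu hp hpu
            exact Finset.prod_eq_zero (Finset.mem_Icc.mpr ⟨h1, h2⟩) (if_neg hB)
        rw [← htarget]
        exact Filter.Tendsto.congr' hev.symm hprod
      -- admissibility of the substituted points, eventually in x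
      have hadm : ∀ᶠ x : ℝ in atTop, ∀ H : {p : ℕ → ℕ // IsForest (n+1) p},
          ∀ v ∈ Finset.Icc 1 (n+1),
          (fun w => ξ₀ w + x * ecoef n u w) v
            + ∑ w ∈ descSet (n+1) H.1 v, (fun w => ξ₀ w + x * ecoef n u w) w ≠ 0 := by
        rw [Filter.eventually_all]
        intro H
        rw [Filter.eventually_all_finset]
        intro v hv
        rw [Finset.mem_Icc] at hv
        have hform : ∀ x : ℝ,
            (fun w => ξ₀ w + x * ecoef n u w) v
              + ∑ w ∈ descSet (n+1) H.1 v, (fun w => ξ₀ w + x * ecoef n u w) w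
            = sigmaFn (n+1) H.1 v ξ₀ + x * sigmaFn (n+1) H.1 v (ecoef n u) :=
          fun x => hsig H.1 v x
        by_cases hB : sigmaFn (n+1) H.1 v (ecoef n u) = 0
        · have hvn : v ≤ n := by
            by_contra hc
            have hveq : v = n+1 := by omega
            rw [hveq, B_top hu H.2] at hB
            norm_num at hB
          have hA : sigmaFn (n+1) H.1 v ξ₀ ≠ 0 := by
            rw [hξ₀, A_eq H.2 ξ' hv.1 hvn]
            exact hξ' ⟨resMap n H.1, resMap_isForest H.2⟩ v (Finset.mem_Icc.mpr ⟨hv.1, hvn⟩)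
          apply Filter.Eventually.of_forall
          intro x
          rw [hform x, hB, mul_zero, add_zero]
          exact hA
        · filter_upwards [eventually_ne_atTop
            (-(sigmaFn (n+1) H.1 v ξ₀) / (sigmaFn (n+1) H.1 v (ecoef n u)))] with x hx
          rw [hform x]
          intro hc
          apply hx
          rw [eq_div_iff hB]
          linarith
      -- the relation, eventually in x
      have hzero : (fun x : ℝ =>
          (∑ H : {p : ℕ → ℕ // IsForest (n+1) p},
            a H * (x * forestFn (n+1) H.1 (fun w => ξ₀ w + x * ecoef n u w))))
            =ᶠ[atTop] (fun _ : ℝ => (0:ℝ)) := by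
        filter_upwards [hadm] with x hx
        have hrel := h (fun w => ξ₀ w + x * ecoef n u w) hx
        rw [finsum_eq_sum_of_fintype] at hrel
        have : (∑ H : {p : ℕ → ℕ // IsForest (n+1) p},
            a H * (x * forestFn (n+1) H.1 (fun w => ξ₀ w + x * ecoef n u w)))
            = x * ∑ H : {p : ℕ → ℕ // IsForest (n+1) p},
                a H * forestFn (n+1) H.1 (fun w => ξ₀ w + x * ecoef n u w) := by
          rw [Finset.mul_sum]
          apply Finset.sum_congr rfl
          intro H _
          ring
        rw [this, hrel, mul_zero]
      -- pass to the limit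
      have hlim : Tendsto
          (fun x : ℝ => ∑ H : {p : ℕ → ℕ // IsForest (n+1) p},
            a H * (x * forestFn (n+1) H.1 (fun w => ξ₀ w + x * ecoef n u w))) atTop
          (nhds (∑ H : {p : ℕ → ℕ // IsForest (n+1) p},
            a H * (if H.1 (n+1) = u then forestFn n (resMap n H.1) ξ' else 0))) := by
        apply tendsto_finset_sum
        intro H _
        exact (hterm H).const_mul (a H)
      have hsum0 : (∑ H : {p : ℕ → ℕ // IsForest (n+1) p},
          a H * (if H.1 (n+1) = u then forestFn n (resMap n H.1) ξ' else 0)) = 0 := by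
        refine tendsto_nhds_unique hlim ?_
        exact Filter.Tendsto.congr' hzero.symm tendsto_const_nhds
      -- reindex the sum
      rw [finsum_eq_sum_of_fintype]
      rw [← hsum0]
      have hsplit : ∀ H : {p : ℕ → ℕ // IsForest (n+1) p},
          a H * (if H.1 (n+1) = u then forestFn n (resMap n H.1) ξ' else 0)
          = if H.1 (n+1) = u then a H * forestFn n (resMap n H.1) ξ' else 0 := by
        intro H
        by_cases hH : H.1 (n+1) = u
        · rw [if_pos hH, if_pos hH]
        · rw [if_neg hH, if_neg hH, mul_zero]
      calc (∑ F' : {p : ℕ → ℕ // IsForest n p}, a (ext F') * forestFn n F'.1 ξ')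
          = ∑ H ∈ Finset.univ.filter
              (fun H : {p : ℕ → ℕ // IsForest (n+1) p} => H.1 (n+1) = u),
              a H * forestFn n (resMap n H.1) ξ' := by
            apply Finset.sum_nbij' (i := fun F' => ext F')
              (j := fun H => ⟨resMap n H.1, resMap_isForest H.2⟩)
            · intro F' _
              rw [Finset.mem_filter]
              refine ⟨Finset.mem_univ _, ?_⟩
              show extMap n u F'.1 (n+1) = u
              simp [extMap]
            · intro H _
              exact Finset.mem_univ _
            · intro F' _
              apply Subtype.ext
              exact res_ext_eq F'.2
            · intro H hH
              rw [Finset.mem_filter] at hH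
              apply Subtype.ext
              exact ext_res_eq H.2 hH.2
            · intro F' _
              have : resMap n (ext F').1 = F'.1 := res_ext_eq F'.2
              rw [this]
        _ = ∑ H : {p : ℕ → ℕ // IsForest (n+1) p},
              if H.1 (n+1) = u then a H * forestFn n (resMap n H.1) ξ' else 0 :=
            Finset.sum_filter _ _
        _ = ∑ H : {p : ℕ → ℕ // IsForest (n+1) p},
              a H * (if H.1 (n+1) = u then forestFn n (resMap n H.1) ξ' else 0) := by
            apply Finset.sum_congr rfl
            intro H _
            exact (hsplit H).symm
    have hF₀ : F₀ = ext ⟨resMap n F₀.1, resMap_isForest F₀.2⟩ := by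
      apply Subtype.ext
      exact (ext_res_eq F₀.2 hu_def.symm).symm
    rw [hF₀]
    exact key' _

/-- **Linear independence of forest rational functions**. -/
theorem forest_rational_functions_linearly_independent
    (n : ℕ) (hn : 1 ≤ n) (a : {p : ℕ → ℕ // IsForest n p} → ℝ)
    (h : ∀ ξ : ℕ → ℝ,
      (∀ F : {p : ℕ → ℕ // IsForest n p}, ∀ v ∈ Finset.Icc 1 n,
        ξ v + ∑ w ∈ descSet n F.1 v, ξ w ≠ 0) →
      ∑ᶠ F : {p : ℕ → ℕ // IsForest n p}, a F * forestFn n F.1 ξ = 0) :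
    ∀ F, a F = 0 :=
  forest_key n a h
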